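/- arXiv:1802.01254 — 7 statements merged into one kernel-verified Lean document; each statement's English description precedes it below -/
import Mathlib

section
/- Let a and a' be two address-independent traces of the same length n. If for every index t (1 ≤ t ≤ n) the reuse time of access t in a equals the reuse time of access t in a' (with infinite reuse times matching infinite reuse times), then a = a'. In other words, an address-independent trace is uniquely determined by its reuse-time sequence. -/
open Finset

/-- The data set of a trace `a` of length `n` (indices 1..n). -/
def dataSet (a : ℕ → ℕ) (n : ℕ) : Finset ℕ := (Finset.Icc 1 n).image a

/-- A trace is address-independent: data items are numbered in order of first appearance. -/
def isAI (a : ℕ → ℕ) (n : ℕ) : Prop :=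
  ∀ t ∈ Finset.Icc 1 n, 1 ≤ a t ∧ a t ≤ 1 + ((Finset.Ico 1 t).image a).card

/-- Indices `s < t` (with `s ≥ 1`) accessing the same datum as `t`. -/
def prevSet (a : ℕ → ℕ) (t : ℕ) : Finset ℕ :=
  (Finset.Ico 1 t).filter (fun s => a s = a t)

/-- Reuse time of access `t`: `t - s*` where `s*` is the previous access to the same
datum, or `⊤` for a first access. -/
def reuseTime (a : ℕ → ℕ) (t : ℕ) : ℕ∞ :=
  if h : (prevSet a t).Nonempty then ((t - (prevSet a t).max' h : ℕ) : ℕ∞) else ⊤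

/-- Reuse distance of access `t`: the number of distinct data accessed in
`a(s*+1), …, a(t)` where `s*` is the previous access to the same datum,
or `⊤` for a first access. -/
def reuseDist (a : ℕ → ℕ) (t : ℕ) : ℕ∞ :=
  if h : (prevSet a t).Nonempty then
    ((((Finset.Icc ((prevSet a t).max' h + 1) t).image a).card : ℕ) : ℕ∞)
  else ⊤

/-- Reuse-time histogram: number of accesses whose reuse time equals `i`. -/
def rtHist (a : ℕ → ℕ) (n i : ℕ) : ℕ :=
  ((Finset.Icc 1 n).filter (fun t => reuseTime a t = (i : ℕ∞))).card

/-- Reuse-distance histogram: number of accesses whose reuse distance equals `v`. -/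
def rdHist (a : ℕ → ℕ) (n v : ℕ) : ℕ :=
  ((Finset.Icc 1 n).filter (fun t => reuseDist a t = (v : ℕ∞))).card

/-- First access time of datum `e`. -/
noncomputable def firstAcc (a : ℕ → ℕ) (n e : ℕ) : ℕ :=
  sInf {t | t ∈ Finset.Icc 1 n ∧ a t = e}

/-- Last access time of datum `e`. -/
noncomputable def lastAcc (a : ℕ → ℕ) (n e : ℕ) : ℕ :=
  sSup {t | t ∈ Finset.Icc 1 n ∧ a t = e}

/-- The sorted list of access times of datum `e` in the trace. -/
def occList (a : ℕ → ℕ) (n e : ℕ) : List ℕ :=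
  ((Finset.Icc 1 n).filter (fun t => a t = e)).sort (· ≤ ·)

/-- Working-set size `ω(t,x)`: distinct data accessed in the window `a(t-x+1), …, a(t)`. -/
def wss (a : ℕ → ℕ) (t x : ℕ) : ℕ := ((Finset.Icc (t - x + 1) t).image a).card

/-- Footprint: the average working-set size over all length-`x` windows. -/
def fp (a : ℕ → ℕ) (n x : ℕ) : ℚ :=
  (∑ t ∈ Finset.Icc x n, (wss a t x : ℚ)) / ((n : ℚ) - (x : ℚ) + 1)

/-- Total working-set size `W(x) = Σ_{t=x}^{n} ω(t,x)`, with `W(0) = 0`. -/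
def totalW (a : ℕ → ℕ) (n x : ℕ) : ℤ :=
  if x = 0 then 0 else ∑ t ∈ Finset.Icc x n, (wss a t x : ℤ)

/-- Steady-state footprint `ss-fp(x) = m - (1/n) Σ_{i=x+1}^{n-1} (i-x)·rt(i)`. -/
def ssfp (a : ℕ → ℕ) (n x : ℕ) : ℚ :=
  ((dataSet a n).card : ℚ)
    - (1 / (n : ℚ)) * ∑ i ∈ Finset.Icc (x + 1) (n - 1), ((i : ℚ) - (x : ℚ)) * (rtHist a n i : ℚ)

lemma ai_image_Icc (a : ℕ → ℕ) (n : ℕ) (ha : isAI a n) :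
    ∀ t, t ≤ n + 1 → (Finset.Ico 1 t).image a
      = Finset.Icc 1 ((Finset.Ico 1 t).image a).card := by
  intro t
  induction t with
  | zero => simp
  | succ t IH =>
    intro htn
    rcases Nat.eq_zero_or_pos t with h0 | h1
    · subst h0; simp
    have hIcc : Finset.Ico 1 (t + 1) = insert t (Finset.Ico 1 t) := by
      ext x; simp only [Finset.mem_Ico, Finset.mem_insert]; omega
    have hIH := IH (by omega)
    have hat := ha t (Finset.mem_Icc.mpr ⟨h1, by omega⟩)
    by_cases hmem : a t ∈ (Finset.Ico 1 t).image a
    · rw [hIcc, Finset.image_insert, Finset.insert_eq_self.mpr hmem]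
      exact hIH
    · have hcard : (insert (a t) ((Finset.Ico 1 t).image a)).card
          = ((Finset.Ico 1 t).image a).card + 1 := Finset.card_insert_of_notMem hmem
      have haval : a t = ((Finset.Ico 1 t).image a).card + 1 := by
        rw [hIH] at hmem
        simp only [Finset.mem_Icc, not_and, not_le] at hmem
        omega
      rw [hIcc, Finset.image_insert, hcard, haval, hIH]
      ext x; simp only [Finset.mem_Icc, Finset.mem_insert, Nat.card_Icc]; omega

/-- An address-independent trace is uniquely determined by its reuse-time sequence. -/
theorem ai_determined_by_reuse_time_sequence (n : ℕ) (a a' : ℕ → ℕ)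
    (ha : isAI a n) (ha' : isAI a' n)
    (h : ∀ t ∈ Finset.Icc 1 n, reuseTime a t = reuseTime a' t) :
    ∀ t ∈ Finset.Icc 1 n, a t = a' t := by
  intro t
  induction t using Nat.strong_induction_on with
  | _ t IH =>
    intro ht
    rw [Finset.mem_Icc] at ht
    have hIH : ∀ s ∈ Finset.Ico 1 t, a s = a' s := by
      intro s hs
      rw [Finset.mem_Ico] at hs
      exact IH s hs.2 (Finset.mem_Icc.mpr ⟨hs.1, by omega⟩)
    have hrt := h t (Finset.mem_Icc.mpr ht)
    by_cases h1 : (prevSet a t).Nonempty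
    · have h2 : (prevSet a' t).Nonempty := by
        by_contra h2
        rw [reuseTime, reuseTime, dif_pos h1, dif_neg h2] at hrt
        exact (ENat.coe_ne_top _) hrt
      rw [reuseTime, reuseTime, dif_pos h1, dif_pos h2] at hrt
      set s1 := (prevSet a t).max' h1 with hs1def
      set s2 := (prevSet a' t).max' h2 with hs2def
      have hs1 : s1 ∈ prevSet a t := Finset.max'_mem _ h1
      have hs2 : s2 ∈ prevSet a' t := Finset.max'_mem _ h2
      simp only [prevSet, Finset.mem_filter, Finset.mem_Ico] at hs1 hs2
      have heq : t - s1 = t - s2 := Nat.cast_injective hrt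
      have hss : s1 = s2 := by omega
      have := hIH s1 (Finset.mem_Ico.mpr hs1.1)
      rw [← hs1.2, this, hss, hs2.2]
    · have h2 : ¬ (prevSet a' t).Nonempty := by
        intro h2
        rw [reuseTime, reuseTime, dif_neg h1, dif_pos h2] at hrt
        exact (ENat.coe_ne_top _) hrt.symm
      have himg : (Finset.Ico 1 t).image a = (Finset.Ico 1 t).image a' :=
        Finset.image_congr (fun s hs => hIH s hs)
      have hic := ai_image_Icc a n ha t (by omega)
      have hic' := ai_image_Icc a' n ha' t (by omega)
      have hnm : a t ∉ (Finset.Ico 1 t).image a := by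
        intro hm
        obtain ⟨s, hs, has⟩ := Finset.mem_image.mp hm
        exact h1 ⟨s, Finset.mem_filter.mpr ⟨hs, has⟩⟩
      have hnm' : a' t ∉ (Finset.Ico 1 t).image a' := by
        intro hm
        obtain ⟨s, hs, has⟩ := Finset.mem_image.mp hm
        exact h2 ⟨s, Finset.mem_filter.mpr ⟨hs, has⟩⟩
      have hat := ha t (Finset.mem_Icc.mpr ht)
      have hat' := ha' t (Finset.mem_Icc.mpr ht)
      rw [hic] at hnm
      rw [hic'] at hnm'
      simp only [Finset.mem_Icc, not_and, not_le] at hnm hnm'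
      have hcc : ((Finset.Ico 1 t).image a).card = ((Finset.Ico 1 t).image a').card := by
        rw [himg]
      omega
end

section
/- Let a and a' be two address-independent traces of length n with the same number m of distinct data items. Suppose for every data item e ∈ {1,…,m}: the first-access time of e is the same in a and a', e is accessed the same number of times in a and a', and for every j ≥ 2 the reuse distance of the j-th access of e in a equals the reuse distance of the j-th access of e in a'. Then a = a'. In other words, an address-independent trace is uniquely determined by the per-datum reuse-distance sequences together with the per-datum first-access times. -/
/-!
Induction on the access time `t`, assuming `a` and `a'` agree before `t`. If `t` is the first
access of `a t` in `a`, the first-access times force `a' t = a t`; symmetrically in `a'`.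
Otherwise `t` is, say, the `j`-th access of `e = a t`, the last before it being at `s`. If
`a' t ≠ e`, the `j`-th access `u` of `e` in `a'` comes after `t` with the same predecessor `s`,
and its window `(s, u]` holds as many distinct data as the window `(s, t]` of `a`, hence the same
ones; so `a' t` already occurs in `a` inside `(s, t)`, and the last access before `t` of `a' t` in
`a'` comes after that of `a t` in `a`. The same holds with `a` and `a'` exchanged, which is absurd.
-/

open Finset

lemma Finset.sort_getD_eq_nth (S : Finset ℕ) (i : ℕ) :
    (S.sort (· ≤ ·)).getD i 0 = Nat.nth (· ∈ S) i := by
  have hS : (Set.ofPred (· ∈ S)).Finite := S.finite_toSet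
  rw [Nat.nth_eq_getD_sort hS]
  congr
  ext
  simp

lemma Nat.count_mem_eq_card_filter_lt (S : Finset ℕ) (x : ℕ) :
    Nat.count (· ∈ S) x = #(S.filter (· < x)) := by
  rw [Nat.count_eq_card_filter_range]
  congr 1
  ext
  simp [and_comm]

section Trace

variable {a a' : ℕ → ℕ} {n t u e : ℕ}

lemma isAI.exists_image_Ico_eq_Icc (ha : isAI a n) :
    ∀ t ≤ n + 1, ∃ k, (Ico 1 t).image a = Icc 1 k := by
  intro t
  induction t with
  | zero => exact fun _ => ⟨0, by simp⟩
  | succ t ih =>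
    intro ht
    rcases Nat.eq_zero_or_pos t with rfl | hpos
    · exact ⟨0, by simp⟩
    obtain ⟨k, hk⟩ := ih (by omega)
    obtain ⟨h1, h2⟩ := ha t (mem_Icc.2 ⟨hpos, by omega⟩)
    rw [hk, Nat.card_Icc] at h2
    rw [Nat.Ico_succ_right_eq_insert_Ico hpos, image_insert, hk]
    rcases Nat.lt_or_ge k (a t) with hgt | hle
    · refine ⟨k + 1, ?_⟩
      ext x
      simp only [mem_insert, mem_Icc]
      omega
    · exact ⟨k, insert_eq_self.2 (mem_Icc.2 ⟨h1, hle⟩)⟩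

lemma isAI.apply_mem_Icc_card_dataSet (ha : isAI a n) (ht : t ∈ Icc 1 n) :
    a t ∈ Icc 1 #(dataSet a n) := by
  obtain ⟨k, hk⟩ := ha.exists_image_Ico_eq_Icc (n + 1) le_rfl
  have hdata : dataSet a n = Icc 1 k := by
    rw [dataSet, ← hk, Finset.Ico_add_one_right_eq_Icc]
  rw [hdata, Nat.card_Icc, Nat.add_sub_cancel, ← hdata]
  exact mem_image_of_mem a ht

lemma firstAcc_apply_eq_of_prevSet_eq_empty (ht : t ∈ Icc 1 n) (h : prevSet a t = ∅) :
    firstAcc a n (a t) = t := by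
  refine le_antisymm (Nat.sInf_le ⟨ht, rfl⟩) (le_csInf ⟨t, ht, rfl⟩ ?_)
  rintro s ⟨hs, hst⟩
  by_contra! hlt
  have : s ∈ prevSet a t := mem_filter.2 ⟨mem_Ico.2 ⟨(mem_Icc.1 hs).1, hlt⟩, hst⟩
  simp [h] at this

lemma apply_firstAcc (h : 1 ≤ firstAcc a n e) : a (firstAcc a n e) = e := by
  have hne : {t | t ∈ Icc 1 n ∧ a t = e}.Nonempty := by
    by_contra hemp
    rw [Set.not_nonempty_iff_eq_empty] at hemp
    rw [firstAcc, hemp, Nat.sInf_empty] at h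
    omega
  exact (Nat.sInf_mem hne).2

lemma apply_eq_of_prevSet_eq_empty (ht : t ∈ Icc 1 n) (h : prevSet a t = ∅)
    (hfirst : firstAcc a n (a t) = firstAcc a' n (a t)) : a' t = a t := by
  have hfa : firstAcc a' n (a t) = t := hfirst ▸ firstAcc_apply_eq_of_prevSet_eq_empty ht h
  have := apply_firstAcc (a := a') (n := n) (e := a t) (hfa.symm ▸ (mem_Icc.1 ht).1)
  rwa [hfa] at this

lemma filter_Icc_filter_lt_eq_filter_Ico (ht : t ≤ n + 1) :
    ((Icc 1 n).filter (fun s => a s = e)).filter (· < t) =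
      (Ico 1 t).filter (fun s => a s = e) := by
  ext s
  simp only [mem_filter, mem_Icc, mem_Ico]
  omega

lemma count_mem_filter_Icc_eq_card_prevSet (ht : t ≤ n) :
    Nat.count (· ∈ (Icc 1 n).filter (fun s => a s = a t)) t = #(prevSet a t) := by
  rw [Nat.count_mem_eq_card_filter_lt, filter_Icc_filter_lt_eq_filter_Ico (by omega), prevSet]

lemma occList_getD_card_prevSet (ht : t ∈ Icc 1 n) :
    (occList a n (a t)).getD #(prevSet a t) 0 = t := by
  rw [occList, Finset.sort_getD_eq_nth, ← count_mem_filter_Icc_eq_card_prevSet (mem_Icc.1 ht).2,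
    Nat.nth_count (by simpa using ht)]

lemma card_prevSet_lt_length_occList (ht : t ∈ Icc 1 n) :
    #(prevSet a t) < (occList a n (a t)).length := by
  rw [occList, length_sort, prevSet,
    ← filter_Icc_filter_lt_eq_filter_Ico (n := n) (by simp at ht; omega)]
  exact card_lt_card (filter_ssubset.2 ⟨t, mem_filter.2 ⟨ht, rfl⟩, lt_irrefl t⟩)

lemma exists_occList_getD_eq {i : ℕ} (hi : i < (occList a n e).length) :
    ∃ u ∈ Icc 1 n, a u = e ∧ #(prevSet a u) = i ∧ (occList a n e).getD i 0 = u := by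
  set S := (Icc 1 n).filter (fun s => a s = e)
  have hS : (Set.ofPred (· ∈ S)).Finite := S.finite_toSet
  have hcard : i < #hS.toFinset := by
    rwa [show hS.toFinset = S by ext; simp, ← length_sort (· ≤ ·)]
  obtain ⟨hun, hae⟩ := mem_filter.1 (Nat.nth_mem_of_lt_card hS hcard)
  refine ⟨_, hun, hae, ?_, Finset.sort_getD_eq_nth S i⟩
  have hcount := count_mem_filter_Icc_eq_card_prevSet (a := a) (mem_Icc.1 hun).2
  rw [hae] at hcount
  rw [← hcount]
  exact Nat.count_nth_of_lt_card_finite hS hcard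

lemma lt_and_prevSet_eq_of_card_prevSet_eq (hpre : ∀ s ∈ Ico 1 t, a s = a' s)
    (hne : a' t ≠ a t) (hu1 : 1 ≤ u) (hu : a' u = a t)
    (hcard : #(prevSet a' u) = #(prevSet a t)) : t < u ∧ prevSet a' u = prevSet a t := by
  set P : ℕ → Finset ℕ := fun x => (Ico 1 x).filter (fun s => a' s = a t)
  have hPu : prevSet a' u = P u := by rw [prevSet, hu]
  have hPt : prevSet a t = P t := filter_congr fun s hs => by rw [hpre s hs]
  have hmono : ∀ {x y}, x ≤ y → P x ⊆ P y := fun h =>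
    filter_subset_filter _ (Ico_subset_Ico_right h)
  rw [hPu, hPt] at hcard ⊢
  have htu : t < u := by
    by_contra! hut
    have hut : u < t := lt_of_le_of_ne hut (by rintro rfl; exact hne hu)
    have hins : insert u (P u) ⊆ P t :=
      insert_subset (mem_filter.2 ⟨mem_Ico.2 ⟨hu1, hut⟩, hu⟩) (hmono hut.le)
    have := card_le_card hins
    rw [card_insert_of_notMem (by simp [P])] at this
    omega
  exact ⟨htu, (eq_of_subset_of_card_le (hmono htu.le) hcard.le).symm⟩

lemma exists_mem_Ioo_apply_eq_of_card_image_eq {s : ℕ} (hst : s < t) (htu : t ≤ u)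
    (hagree : ∀ v ∈ Ioo s t, a v = a' v) (hu : a' u = a t)
    (hcard : #((Icc (s + 1) u).image a') = #((Icc (s + 1) t).image a))
    (hne : a' t ≠ a t) : ∃ v ∈ Ioo s t, a v = a' t := by
  have hsub : (Icc (s + 1) t).image a ⊆ (Icc (s + 1) u).image a' := by
    intro x hx
    obtain ⟨v, hv, rfl⟩ := mem_image.1 hx
    rw [mem_Icc] at hv
    rcases hv.2.lt_or_eq with hvt | rfl
    · rw [hagree v (mem_Ioo.2 ⟨by omega, hvt⟩)]
      exact mem_image_of_mem a' (mem_Icc.2 ⟨hv.1, by omega⟩)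
    · exact mem_image.2 ⟨u, mem_Icc.2 ⟨by omega, le_rfl⟩, hu⟩
  have hmem : a' t ∈ (Icc (s + 1) t).image a := by
    rw [eq_of_subset_of_card_le hsub hcard.le]
    exact mem_image_of_mem a' (mem_Icc.2 ⟨hst, htu⟩)
  obtain ⟨v, hv, hav⟩ := mem_image.1 hmem
  rw [mem_Icc] at hv
  refine ⟨v, mem_Ioo.2 ⟨hv.1, hv.2.lt_of_ne ?_⟩, hav⟩
  rintro rfl
  exact hne hav.symm

lemma max'_prevSet_lt_max'_prevSet (hpre : ∀ s ∈ Ico 1 t, a s = a' s) (ht : t ∈ Icc 1 n)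
    (hne : a' t ≠ a t) (hO : (prevSet a t).Nonempty) (hO' : (prevSet a' t).Nonempty)
    (hlen : (occList a n (a t)).length ≤ (occList a' n (a t)).length)
    (hrd : ∀ j, 2 ≤ j → j ≤ (occList a n (a t)).length →
      reuseDist a ((occList a n (a t)).getD (j - 1) 0)
        = reuseDist a' ((occList a' n (a t)).getD (j - 1) 0)) :
    (prevSet a t).max' hO < (prevSet a' t).max' hO' := by
  have hj := card_prevSet_lt_length_occList (a := a) ht
  obtain ⟨u, hu, hau, hcard, hget⟩ := exists_occList_getD_eq (hj.trans_le hlen)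
  obtain ⟨htu, hprev⟩ :=
    lt_and_prevSet_eq_of_card_prevSet_eq hpre hne (mem_Icc.1 hu).1 hau hcard
  have hrdtu := hrd (#(prevSet a t) + 1) (by simpa using hO.card_pos) hj
  simp only [Nat.add_sub_cancel, occList_getD_card_prevSet ht, hget] at hrdtu
  rw [reuseDist, reuseDist, hprev, dif_pos hO, dif_pos hO, Nat.cast_inj] at hrdtu
  set s := (prevSet a t).max' hO
  obtain ⟨hs, -⟩ := mem_filter.1 (max'_mem _ hO)
  have hIoo : Ioo s t ⊆ Ico 1 t :=
    Ioo_subset_Ico_self.trans (Ico_subset_Ico_left (mem_Ico.1 hs).1)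
  obtain ⟨v, hv, hav⟩ := exists_mem_Ioo_apply_eq_of_card_image_eq (mem_Ico.1 hs).2 htu.le
    (fun v hv => hpre v (hIoo hv)) hau hrdtu.symm hne
  have hvprev : v ∈ prevSet a' t := mem_filter.2 ⟨hIoo hv, by rw [← hpre v (hIoo hv), hav]⟩
  exact (mem_Ioo.1 hv).1.trans_le (le_max' _ v hvprev)

end Trace

/-- An address-independent trace is uniquely determined by the per-datum reuse-distance
sequences together with the per-datum first-access times. -/
theorem ai_determined_by_per_datum_reuse_distances (n m : ℕ) (a a' : ℕ → ℕ)
    (ha : isAI a n) (ha' : isAI a' n)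
    (hm : (dataSet a n).card = m) (hm' : (dataSet a' n).card = m)
    (hfirst : ∀ e ∈ Finset.Icc 1 m, firstAcc a n e = firstAcc a' n e)
    (hcnt : ∀ e ∈ Finset.Icc 1 m, (occList a n e).length = (occList a' n e).length)
    (hrd : ∀ e ∈ Finset.Icc 1 m, ∀ j, 2 ≤ j → j ≤ (occList a n e).length →
      reuseDist a ((occList a n e).getD (j - 1) 0)
        = reuseDist a' ((occList a' n e).getD (j - 1) 0)) :
    ∀ t ∈ Finset.Icc 1 n, a t = a' t := by
  intro t
  induction t using Nat.strong_induction_on with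
  | _ t ih =>
  intro ht
  have hpre : ∀ s ∈ Ico 1 t, a s = a' s := fun s hs =>
    ih s (mem_Ico.1 hs).2 (mem_Icc.2 ⟨(mem_Ico.1 hs).1, by grind⟩)
  have hmem : a t ∈ Icc 1 m := hm ▸ ha.apply_mem_Icc_card_dataSet ht
  have hmem' : a' t ∈ Icc 1 m := hm' ▸ ha'.apply_mem_Icc_card_dataSet ht
  by_cases hO : (prevSet a t).Nonempty
  swap
  · exact (apply_eq_of_prevSet_eq_empty ht (not_nonempty_iff_eq_empty.1 hO) (hfirst _ hmem)).symm
  by_cases hO' : (prevSet a' t).Nonempty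
  swap
  · exact apply_eq_of_prevSet_eq_empty ht (not_nonempty_iff_eq_empty.1 hO') (hfirst _ hmem').symm
  by_contra hne
  have hlt := max'_prevSet_lt_max'_prevSet hpre ht (Ne.symm hne) hO hO' (hcnt _ hmem).le
    (hrd _ hmem)
  have hgt := max'_prevSet_lt_max'_prevSet (fun s hs => (hpre s hs).symm) ht hne hO' hO
    (hcnt _ hmem').ge
    fun j hj hjl => (hrd _ hmem' j hj (hjl.trans_eq (hcnt _ hmem').symm)).symm
  exact lt_asymm hlt hgt
end

section
/- Without first-access times, per-datum reuse-distance sequences do not determine the trace: there exist two distinct address-independent traces a and a' of the same length n with the same number m of distinct data items, together with a bijection σ of {1,…,m}, such that for every data item e, e is accessed in a the same number of times as σ(e) is accessed in a', and for every j ≥ 2 the reuse distance of the j-th access of e in a equals the reuse distance of the j-th access of σ(e) in a'. (For example a = (1,1,2,3,2) and a' = (1,2,1,3,3), with n = 5 and m = 3.) -/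
open Finset

/-- Without first-access times, per-datum reuse-distance sequences do not determine
the trace (even up to a renaming of the data items). -/
theorem per_datum_reuse_distances_insufficient :
    ∃ (n m : ℕ) (a a' : ℕ → ℕ) (σ : ℕ → ℕ),
      isAI a n ∧ isAI a' n ∧
      (dataSet a n).card = m ∧ (dataSet a' n).card = m ∧
      Set.BijOn σ (Set.Icc 1 m) (Set.Icc 1 m) ∧
      (∃ t ∈ Finset.Icc 1 n, a t ≠ a' t) ∧
      (∀ e ∈ Finset.Icc 1 m,
        (occList a n e).length = (occList a' n (σ e)).length ∧
        ∀ j, 2 ≤ j → j ≤ (occList a n e).length →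
          reuseDist a ((occList a n e).getD (j - 1) 0)
            = reuseDist a' ((occList a' n (σ e)).getD (j - 1) 0)) := by
  refine ⟨5, 3, (fun t => [0,1,1,2,3,2].getD t 0), (fun t => [0,1,2,1,3,3].getD t 0),
    (fun e => [0,3,1,2].getD e 0), ?_, ?_, ?_, ?_, ?_, ?_, ?_⟩
  · unfold isAI; decide
  · unfold isAI; decide
  · decide
  · decide
  · refine ⟨?_, ?_, ?_⟩
    · intro x hx
      simp only [Set.mem_Icc] at hx ⊢
      obtain ⟨h1, h2⟩ := hx
      interval_cases x <;> simp
    · intro x hx y hy hxy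
      simp only [Set.mem_Icc] at hx hy
      obtain ⟨hx1, hx2⟩ := hx
      obtain ⟨hy1, hy2⟩ := hy
      interval_cases x <;> interval_cases y <;> simp_all
    · intro y hy
      simp only [Set.mem_Icc] at hy
      obtain ⟨hy1, hy2⟩ := hy
      interval_cases y
      · exact ⟨2, by simp, rfl⟩
      · exact ⟨3, by simp, rfl⟩
      · exact ⟨1, by simp, rfl⟩
  · exact ⟨2, by decide, by decide⟩
  · have h1 : occList (fun t => [0,1,1,2,3,2].getD t 0) 5 1 = [1, 2] := by
      rw [occList, show (Finset.Icc 1 5).filter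
        (fun t => (fun t => [0,1,1,2,3,2].getD t 0) t = 1) = ({1, 2} : Finset ℕ) from by decide,
        Finset.sort_insert _ (by decide) (by decide), Finset.sort_singleton]
    have h2 : occList (fun t => [0,1,1,2,3,2].getD t 0) 5 2 = [3, 5] := by
      rw [occList, show (Finset.Icc 1 5).filter
        (fun t => (fun t => [0,1,1,2,3,2].getD t 0) t = 2) = ({3, 5} : Finset ℕ) from by decide,
        Finset.sort_insert _ (by decide) (by decide), Finset.sort_singleton]
    have h3 : occList (fun t => [0,1,1,2,3,2].getD t 0) 5 3 = [4] := by
      rw [occList, show (Finset.Icc 1 5).filter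
        (fun t => (fun t => [0,1,1,2,3,2].getD t 0) t = 3) = ({4} : Finset ℕ) from by decide,
        Finset.sort_singleton]
    have h1' : occList (fun t => [0,1,2,1,3,3].getD t 0) 5 3 = [4, 5] := by
      rw [occList, show (Finset.Icc 1 5).filter
        (fun t => (fun t => [0,1,2,1,3,3].getD t 0) t = 3) = ({4, 5} : Finset ℕ) from by decide,
        Finset.sort_insert _ (by decide) (by decide), Finset.sort_singleton]
    have h2' : occList (fun t => [0,1,2,1,3,3].getD t 0) 5 1 = [1, 3] := by
      rw [occList, show (Finset.Icc 1 5).filter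
        (fun t => (fun t => [0,1,2,1,3,3].getD t 0) t = 1) = ({1, 3} : Finset ℕ) from by decide,
        Finset.sort_insert _ (by decide) (by decide), Finset.sort_singleton]
    have h3' : occList (fun t => [0,1,2,1,3,3].getD t 0) 5 2 = [2] := by
      rw [occList, show (Finset.Icc 1 5).filter
        (fun t => (fun t => [0,1,2,1,3,3].getD t 0) t = 2) = ({2} : Finset ℕ) from by decide,
        Finset.sort_singleton]
    intro e he
    fin_cases he
    · refine ⟨by show _ = (occList _ 5 3).length; rw [h1, h1']; rfl, fun j hj hj' => ?_⟩
      rw [h1] at hj' ⊢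
      show _ = reuseDist _ ((occList _ 5 3).getD (j-1) 0)
      rw [h1']
      have : j = 2 := by simp at hj'; omega
      subst this
      decide
    · refine ⟨by show _ = (occList _ 5 1).length; rw [h2, h2']; rfl, fun j hj hj' => ?_⟩
      rw [h2] at hj' ⊢
      show _ = reuseDist _ ((occList _ 5 1).getD (j-1) 0)
      rw [h2']
      have : j = 2 := by simp at hj'; omega
      subst this
      decide
    · refine ⟨by show _ = (occList _ 5 2).length; rw [h3, h3']; rfl, fun j hj hj' => ?_⟩
      rw [h3] at hj'
      simp at hj'
      omega
end

section
/- In a sealed trace of length n with m distinct data items, the average reuse time is m; precisely, Σ_{i=1}^{n−1} i·rt(i) = m·(n − m). -/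
open Finset

def nextSetAux (a : ℕ → ℕ) (n t : ℕ) : Finset ℕ :=
  (Finset.Ioc t n).filter (fun s => a s = a t)

noncomputable def svAux (a : ℕ → ℕ) (t : ℕ) : ℕ :=
  if h : (prevSet a t).Nonempty then (prevSet a t).max' h else 0

noncomputable def nvAux (a : ℕ → ℕ) (n t : ℕ) : ℕ :=
  if h : (nextSetAux a n t).Nonempty then (nextSetAux a n t).min' h else 0

lemma mem_prevSet {a : ℕ → ℕ} {s t : ℕ} :
    s ∈ prevSet a t ↔ (1 ≤ s ∧ s < t) ∧ a s = a t := by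
  simp [prevSet, Finset.mem_filter, Finset.mem_Ico]

lemma mem_nextSetAux {a : ℕ → ℕ} {n s t : ℕ} :
    s ∈ nextSetAux a n t ↔ (t < s ∧ s ≤ n) ∧ a s = a t := by
  simp [nextSetAux, Finset.mem_filter, Finset.mem_Ioc]

lemma svAux_mem {a : ℕ → ℕ} {t : ℕ} (h : (prevSet a t).Nonempty) :
    svAux a t ∈ prevSet a t := by
  rw [svAux, dif_pos h]; exact Finset.max'_mem _ h

lemma nvAux_mem {a : ℕ → ℕ} {n t : ℕ} (h : (nextSetAux a n t).Nonempty) :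
    nvAux a n t ∈ nextSetAux a n t := by
  rw [nvAux, dif_pos h]; exact Finset.min'_mem _ h

lemma sv_props {a : ℕ → ℕ} {n t : ℕ} (ht : t ∈ Finset.Icc 1 n)
    (h : (prevSet a t).Nonempty) :
    svAux a t ∈ (Finset.Icc 1 n).filter (fun s => (nextSetAux a n s).Nonempty) ∧
      nvAux a n (svAux a t) = t := by
  obtain ⟨⟨hs1, hst⟩, hsa⟩ := mem_prevSet.mp (svAux_mem h)
  rw [Finset.mem_Icc] at ht
  have htmem : t ∈ nextSetAux a n (svAux a t) :=
    mem_nextSetAux.mpr ⟨⟨hst, ht.2⟩, hsa.symm⟩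
  have hne : (nextSetAux a n (svAux a t)).Nonempty := ⟨t, htmem⟩
  refine ⟨Finset.mem_filter.mpr ⟨Finset.mem_Icc.mpr ⟨hs1, by omega⟩, hne⟩, ?_⟩
  obtain ⟨⟨hlt, hle⟩, hua⟩ := mem_nextSetAux.mp (nvAux_mem hne)
  have hle_t : nvAux a n (svAux a t) ≤ t := by
    rw [nvAux, dif_pos hne]; exact Finset.min'_le _ _ htmem
  rcases lt_or_eq_of_le hle_t with hlt' | heq
  · exfalso
    have : nvAux a n (svAux a t) ∈ prevSet a t :=
      mem_prevSet.mpr ⟨⟨by omega, hlt'⟩, by rw [hua, hsa]⟩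
    have : nvAux a n (svAux a t) ≤ svAux a t := by
      conv_rhs => rw [svAux, dif_pos h]
      exact Finset.le_max' _ _ this
    omega
  · exact heq

lemma nv_props {a : ℕ → ℕ} {n t : ℕ} (ht : t ∈ Finset.Icc 1 n)
    (h : (nextSetAux a n t).Nonempty) :
    nvAux a n t ∈ (Finset.Icc 1 n).filter (fun s => (prevSet a s).Nonempty) ∧
      svAux a (nvAux a n t) = t := by
  obtain ⟨⟨hlt, hle⟩, hua⟩ := mem_nextSetAux.mp (nvAux_mem h)
  rw [Finset.mem_Icc] at ht
  have htmem : t ∈ prevSet a (nvAux a n t) :=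
    mem_prevSet.mpr ⟨⟨ht.1, hlt⟩, hua.symm⟩
  have hne : (prevSet a (nvAux a n t)).Nonempty := ⟨t, htmem⟩
  refine ⟨Finset.mem_filter.mpr ⟨Finset.mem_Icc.mpr ⟨by omega, hle⟩, hne⟩, ?_⟩
  obtain ⟨⟨hs1, hst⟩, hsa⟩ := mem_prevSet.mp (svAux_mem hne)
  have hge_t : t ≤ svAux a (nvAux a n t) := by
    rw [svAux, dif_pos hne]; exact Finset.le_max' _ _ htmem
  rcases lt_or_eq_of_le hge_t with hlt' | heq
  · exfalso
    have : svAux a (nvAux a n t) ∈ nextSetAux a n t :=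
      mem_nextSetAux.mpr ⟨⟨hlt', by omega⟩, by rw [hsa, hua]⟩
    have : nvAux a n t ≤ svAux a (nvAux a n t) := by
      conv_lhs => rw [nvAux, dif_pos h]
      exact Finset.min'_le _ _ this
    omega
  · exact heq.symm

lemma first_eq {a : ℕ → ℕ} {n t : ℕ} (ht : t ∈ Finset.Icc 1 n)
    (h : ¬(prevSet a t).Nonempty) : firstAcc a n (a t) = t := by
  have htS : t ∈ {s | s ∈ Finset.Icc 1 n ∧ a s = a t} := ⟨ht, rfl⟩
  have hne : {s | s ∈ Finset.Icc 1 n ∧ a s = a t}.Nonempty := ⟨t, htS⟩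
  have hmem := Nat.sInf_mem hne
  have hle : firstAcc a n (a t) ≤ t := Nat.sInf_le htS
  rcases lt_or_eq_of_le hle with hlt | heq
  · exfalso
    apply h
    refine ⟨sInf {s | s ∈ Finset.Icc 1 n ∧ a s = a t}, mem_prevSet.mpr ⟨⟨?_, hlt⟩, hmem.2⟩⟩
    exact (Finset.mem_Icc.mp hmem.1).1
  · exact heq

lemma last_eq {a : ℕ → ℕ} {n t : ℕ} (ht : t ∈ Finset.Icc 1 n)
    (h : ¬(nextSetAux a n t).Nonempty) : lastAcc a n (a t) = t := by
  have htS : t ∈ {s | s ∈ Finset.Icc 1 n ∧ a s = a t} := ⟨ht, rfl⟩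
  have hbdd : BddAbove {s | s ∈ Finset.Icc 1 n ∧ a s = a t} :=
    ⟨n, fun x hx => (Finset.mem_Icc.mp hx.1).2⟩
  have hne : {s | s ∈ Finset.Icc 1 n ∧ a s = a t}.Nonempty := ⟨t, htS⟩
  have hmem := Nat.sSup_mem hne hbdd
  have hge : t ≤ lastAcc a n (a t) := le_csSup hbdd htS
  rcases lt_or_eq_of_le hge with hlt | heq
  · exfalso
    apply h
    refine ⟨sSup {s | s ∈ Finset.Icc 1 n ∧ a s = a t},
      mem_nextSetAux.mpr ⟨⟨hlt, (Finset.mem_Icc.mp hmem.1).2⟩, hmem.2⟩⟩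
  · exact heq.symm

/-- In a sealed trace, the average reuse time is m: Σ_{i=1}^{n-1} i·rt(i) = m(n−m). -/
theorem sealed_trace_total_reuse_time (n m : ℕ) (a : ℕ → ℕ)
    (hm : (dataSet a n).card = m)
    (hsealed : ∀ e ∈ dataSet a n, firstAcc a n e ≤ m ∧ n - m + 1 ≤ lastAcc a n e) :
    ∑ i ∈ Finset.Icc 1 (n - 1), i * rtHist a n i = m * (n - m) := by
  classical
  set S := (Finset.Icc 1 n).filter (fun t => (prevSet a t).Nonempty) with hS
  set F := (Finset.Icc 1 n).filter (fun t => ¬(prevSet a t).Nonempty) with hF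
  set T := (Finset.Icc 1 n).filter (fun t => (nextSetAux a n t).Nonempty) with hT
  set L := (Finset.Icc 1 n).filter (fun t => ¬(nextSetAux a n t).Nonempty) with hL
  have hmn : m ≤ n := by
    rw [← hm]
    calc (dataSet a n).card ≤ (Finset.Icc 1 n).card := Finset.card_image_le
    _ = n := by rw [Nat.card_Icc]; omega
  -- Step 1 : sum over histogram = sum of reuse times over non-first accesses
  have step1 : ∑ i ∈ Finset.Icc 1 (n-1), i * rtHist a n i = ∑ t ∈ S, (t - svAux a t) := by
    have hmaps : ∀ t ∈ S, t - svAux a t ∈ Finset.Icc 1 (n-1) := by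
      intro t htS
      rw [hS, Finset.mem_filter] at htS
      obtain ⟨ht, hne⟩ := htS
      obtain ⟨⟨hs1, hst⟩, _⟩ := mem_prevSet.mp (svAux_mem hne)
      rw [Finset.mem_Icc] at ht ⊢
      omega
    rw [← Finset.sum_fiberwise_of_maps_to hmaps (fun t => t - svAux a t)]
    refine Finset.sum_congr rfl (fun i hi => ?_)
    have hfilter : (Finset.Icc 1 n).filter (fun t => reuseTime a t = (i : ℕ∞))
        = S.filter (fun t => t - svAux a t = i) := by
      rw [hS, Finset.filter_filter]
      refine Finset.filter_congr (fun t ht => ?_)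
      unfold reuseTime svAux
      by_cases h : (prevSet a t).Nonempty
      · simp only [h, dite_true, true_and, Nat.cast_inj]
      · simp [h]
    rw [rtHist, hfilter,
      Finset.sum_congr rfl (fun t ht => (Finset.mem_filter.mp ht).2),
      Finset.sum_const, smul_eq_mul, mul_comm]
  -- Step 2 : to integers
  have hsvle : ∀ t ∈ S, svAux a t ≤ t := by
    intro t htS
    rw [hS, Finset.mem_filter] at htS
    obtain ⟨⟨hs1, hst⟩, _⟩ := mem_prevSet.mp (svAux_mem htS.2)
    omega
  have step2 : ((∑ t ∈ S, (t - svAux a t) : ℕ) : ℤ)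
      = ∑ t ∈ S, ((t : ℤ) - (svAux a t : ℤ)) := by
    rw [Nat.cast_sum]
    exact Finset.sum_congr rfl (fun t htS => by
      rw [Nat.cast_sub (hsvle t htS)])
  -- Step 3 : bijection between non-first and non-last accesses
  have step3 : ∑ t ∈ S, ((svAux a t : ℤ)) = ∑ t ∈ T, (t : ℤ) := by
    refine Finset.sum_nbij' (svAux a) (nvAux a n) ?_ ?_ ?_ ?_ ?_
    · intro t htS
      rw [hS, Finset.mem_filter] at htS
      exact (sv_props htS.1 htS.2).1
    · intro t htT
      rw [hT, Finset.mem_filter] at htT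
      exact (nv_props htT.1 htT.2).1
    · intro t htS
      rw [hS, Finset.mem_filter] at htS
      exact (sv_props htS.1 htS.2).2
    · intro t htT
      rw [hT, Finset.mem_filter] at htT
      exact (nv_props htT.1 htT.2).2
    · intro t _; rfl
  -- Step 4 : splitting the full index sum
  have hSF : ∑ t ∈ S, (t : ℤ) + ∑ t ∈ F, (t : ℤ) = ∑ t ∈ Finset.Icc 1 n, (t : ℤ) :=
    Finset.sum_filter_add_sum_filter_not _ _ _
  have hTL : ∑ t ∈ T, (t : ℤ) + ∑ t ∈ L, (t : ℤ) = ∑ t ∈ Finset.Icc 1 n, (t : ℤ) :=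
    Finset.sum_filter_add_sum_filter_not _ _ _
  -- F = Icc 1 m
  have hcardF : F.card = m := by
    rw [← hm]
    refine Finset.card_bij (fun t _ => a t) ?_ ?_ ?_
    · intro t htF
      rw [hF, Finset.mem_filter] at htF
      exact Finset.mem_image_of_mem a htF.1
    · intro t1 h1 t2 h2 heq
      rw [hF, Finset.mem_filter] at h1 h2
      by_contra hne
      rcases Nat.lt_or_ge t1 t2 with hlt | hge
      · exact h2.2 ⟨t1, mem_prevSet.mpr ⟨⟨(Finset.mem_Icc.mp h1.1).1, hlt⟩, heq⟩⟩
      · have hlt : t2 < t1 := by omega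
        exact h1.2 ⟨t2, mem_prevSet.mpr ⟨⟨(Finset.mem_Icc.mp h2.1).1, hlt⟩, heq.symm⟩⟩
    · intro e he
      have hne : {s | s ∈ Finset.Icc 1 n ∧ a s = e}.Nonempty := by
        obtain ⟨t, ht, hte⟩ := Finset.mem_image.mp he
        exact ⟨t, ht, hte⟩
      have hmem := Nat.sInf_mem hne
      refine ⟨sInf {s | s ∈ Finset.Icc 1 n ∧ a s = e}, ?_, hmem.2⟩
      rw [hF, Finset.mem_filter]
      refine ⟨hmem.1, ?_⟩
      rintro ⟨s, hs⟩
      obtain ⟨⟨hs1, hst⟩, hsa⟩ := mem_prevSet.mp hs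
      have hsmem : s ∈ {s | s ∈ Finset.Icc 1 n ∧ a s = e} := by
        refine ⟨Finset.mem_Icc.mpr ⟨hs1, ?_⟩, by rw [hsa, hmem.2]⟩
        have := (Finset.mem_Icc.mp hmem.1).2
        omega
      have := Nat.sInf_le hsmem
      omega
  have hFeq : F = Finset.Icc 1 m := by
    refine Finset.eq_of_subset_of_card_le ?_ (by rw [Nat.card_Icc, hcardF]; omega)
    intro t htF
    rw [hF, Finset.mem_filter] at htF
    have hfe := first_eq htF.1 htF.2
    have hd : a t ∈ dataSet a n := Finset.mem_image_of_mem a htF.1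
    have := (hsealed _ hd).1
    rw [Finset.mem_Icc]
    exact ⟨(Finset.mem_Icc.mp htF.1).1, by omega⟩
  -- L = Icc (n-m+1) n
  have hcardL : L.card = m := by
    rw [← hm]
    refine Finset.card_bij (fun t _ => a t) ?_ ?_ ?_
    · intro t htL
      rw [hL, Finset.mem_filter] at htL
      exact Finset.mem_image_of_mem a htL.1
    · intro t1 h1 t2 h2 heq
      rw [hL, Finset.mem_filter] at h1 h2
      by_contra hne
      rcases Nat.lt_or_ge t1 t2 with hlt | hge
      · exact h1.2 ⟨t2, mem_nextSetAux.mpr ⟨⟨hlt, (Finset.mem_Icc.mp h2.1).2⟩, heq.symm⟩⟩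
      · have hlt : t2 < t1 := by omega
        exact h2.2 ⟨t1, mem_nextSetAux.mpr ⟨⟨hlt, (Finset.mem_Icc.mp h1.1).2⟩, heq⟩⟩
    · intro e he
      have hne : {s | s ∈ Finset.Icc 1 n ∧ a s = e}.Nonempty := by
        obtain ⟨t, ht, hte⟩ := Finset.mem_image.mp he
        exact ⟨t, ht, hte⟩
      have hbdd : BddAbove {s | s ∈ Finset.Icc 1 n ∧ a s = e} :=
        ⟨n, fun x hx => (Finset.mem_Icc.mp hx.1).2⟩
      have hmem := Nat.sSup_mem hne hbdd
      refine ⟨sSup {s | s ∈ Finset.Icc 1 n ∧ a s = e}, ?_, hmem.2⟩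
      rw [hL, Finset.mem_filter]
      refine ⟨hmem.1, ?_⟩
      rintro ⟨s, hs⟩
      obtain ⟨⟨hst, hsn⟩, hsa⟩ := mem_nextSetAux.mp hs
      have hsmem : s ∈ {s | s ∈ Finset.Icc 1 n ∧ a s = e} := by
        refine ⟨Finset.mem_Icc.mpr ⟨?_, hsn⟩, by rw [hsa, hmem.2]⟩
        have := (Finset.mem_Icc.mp hmem.1).1
        omega
      have := le_csSup hbdd hsmem
      omega
  have hLeq : L = Finset.Icc (n - m + 1) n := by
    refine Finset.eq_of_subset_of_card_le ?_ (by rw [Nat.card_Icc, hcardL]; omega)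
    intro t htL
    rw [hL, Finset.mem_filter] at htL
    have hle := last_eq htL.1 htL.2
    have hd : a t ∈ dataSet a n := Finset.mem_image_of_mem a htL.1
    have := (hsealed _ hd).2
    rw [Finset.mem_Icc]
    exact ⟨by omega, (Finset.mem_Icc.mp htL.1).2⟩
  -- final arithmetic
  have hLsum : ∑ t ∈ Finset.Icc (n-m+1) n, (t : ℤ)
      = ∑ i ∈ Finset.Icc 1 m, ((i : ℤ) + ((n - m : ℕ) : ℤ)) := by
    refine Finset.sum_nbij' (fun t => t - (n-m)) (fun i => i + (n-m)) ?_ ?_ ?_ ?_ ?_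
    · intro x hx; rw [Finset.mem_Icc] at hx ⊢; omega
    · intro x hx; rw [Finset.mem_Icc] at hx ⊢; omega
    · intro x hx; rw [Finset.mem_Icc] at hx; omega
    · intro x hx; rw [Finset.mem_Icc] at hx; omega
    · intro x hx
      rw [Finset.mem_Icc] at hx
      have h1 : n - m ≤ x := by omega
      rw [Nat.cast_sub h1]
      ring
  have key : ((∑ i ∈ Finset.Icc 1 (n-1), i * rtHist a n i : ℕ) : ℤ)
      = ((m * (n - m) : ℕ) : ℤ) := by
    rw [step1, step2, Finset.sum_sub_distrib, step3]
    have : ∑ t ∈ S, (t : ℤ) - ∑ t ∈ T, (t : ℤ)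
        = ∑ t ∈ L, (t : ℤ) - ∑ t ∈ F, (t : ℤ) := by omega
    rw [this, hLeq, hFeq, hLsum, Finset.sum_add_distrib, Finset.sum_const,
      Nat.card_Icc]
    push_cast
    ring
  exact_mod_cast key
end

section
/- (Xiang formula) For every trace of length n with m distinct data items and every window length x with 1 ≤ x ≤ n, the total working-set size over all length-x windows satisfies Σ_{t=x}^{n} ω(t,x) = (n−x+1)·m − Σ_{i=x+1}^{n−1} (i−x)·rt(i) − Σ_{e ∈ M} max(f_e − x, 0) − Σ_{e ∈ M} max((n+1−l_e) − x, 0); equivalently, fp(x) = m − (1/(n−x+1))·[Σ_{i=x+1}^{n−1} (i−x)·rt(i) + Σ_{e ∈ M} max(f_e − x, 0) + Σ_{e ∈ M} max((n+1−l_e) − x, 0)]. -/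
open Finset

/-!
Count, for each datum `e`, the length-`x` windows that miss `e`. Between consecutive accesses
`s < u` of `e` these are the windows ending in `[s + x, u - 1]`, that is `u - s - x` of them;
before the first access `F` there are `F - x` (a virtual access at time `0`), after the last
access `L` there are `n + 1 - L - x`. Summing over `e`,
`Σ_t ω(t, x) = m (n - x + 1) - Σ_e #(windows missing e)`, and since the gaps between consecutive
accesses are exactly the finite reuse times, regrouping them by length gives the `rt` term.
-/

/-- The last element of `P` before `u`, or `0` (the virtual access) if there is none. -/
def lastBefore (P : Finset ℕ) (u : ℕ) : ℕ := (P.filter (· < u)).sup id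

theorem sum_card_add_sum_card_filter_not_mem {α β : Type*} [DecidableEq β] {s : Finset α}
    {D : Finset β} {A : α → Finset β} (hA : ∀ t ∈ s, A t ⊆ D) :
    ∑ t ∈ s, #(A t) + ∑ d ∈ D, #{t ∈ s | d ∉ A t} = #D * #s := by
  have hcount : ∑ t ∈ s, #(A t) = ∑ d ∈ D, #{t ∈ s | d ∈ A t} :=
    calc ∑ t ∈ s, #(A t) = ∑ t ∈ s, #{d ∈ D | d ∈ A t} := sum_congr rfl fun t ht => by
          rw [filter_mem_eq_inter, inter_eq_right.2 (hA t ht)]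
      _ = ∑ d ∈ D, #{t ∈ s | d ∈ A t} :=
        sum_card_bipartiteAbove_eq_sum_card_bipartiteBelow _
  rw [hcount, ← sum_add_distrib, sum_congr rfl fun d _ => card_filter_add_card_filter_not _,
    sum_const, smul_eq_mul]

section Windows

variable {Q : Finset ℕ} {b : ℕ}

theorem lastBefore_insert_self (hQb : ∀ q ∈ Q, q < b) :
    lastBefore (insert b Q) b = Q.sup id := by
  rw [lastBefore, filter_insert, if_neg (lt_irrefl b), filter_true_of_mem hQb]

theorem lastBefore_insert_of_mem (hQb : ∀ q ∈ Q, q < b) {u : ℕ} (hu : u ∈ Q) :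
    lastBefore (insert b Q) u = lastBefore Q u := by
  rw [lastBefore, filter_insert, if_neg (hQb u hu).asymm, lastBefore]

theorem sup_insert_of_forall_lt (hQb : ∀ q ∈ Q, q < b) : (insert b Q).sup id = b := by
  rw [sup_insert, id, sup_eq_left]
  exact Finset.sup_le fun q hq => (hQb q hq).le

theorem filter_window_disjoint_insert (x N : ℕ) (hQb : ∀ q ∈ Q, q < b) (hbN : b ≤ N) :
    {t ∈ Ico x N | Disjoint (Icc (t - x + 1) t) (insert b Q)}
      = {t ∈ Ico x b | Disjoint (Icc (t - x + 1) t) Q} ∪ Ico (b + x) N := by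
  ext t
  simp only [mem_union, mem_filter, mem_Ico, disjoint_insert_right, mem_Icc]
  constructor
  · rintro ⟨⟨hxt, htN⟩, hb, hQ⟩
    by_cases htb : t < b
    · exact Or.inl ⟨⟨hxt, htb⟩, hQ⟩
    · exact Or.inr ⟨by omega, htN⟩
  · rintro (⟨⟨hxt, htb⟩, hQ⟩ | ⟨hbt, htN⟩)
    · exact ⟨⟨hxt, by omega⟩, by omega, hQ⟩
    · refine ⟨⟨by omega, htN⟩, by omega, disjoint_left.2 fun s hs hsQ => ?_⟩
      have := hQb s hsQ
      rw [mem_Icc] at hs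
      omega

theorem card_filter_window_disjoint (P : Finset ℕ) (x N : ℕ) (hP : ∀ p ∈ P, p < N) :
    #{t ∈ Ico x N | Disjoint (Icc (t - x + 1) t) P}
      = ∑ u ∈ P, (u - lastBefore P u - x) + (N - P.sup id - x) := by
  induction P using Finset.induction_on_max generalizing N with
  | empty => simp
  | insert b Q hQb ih =>
    have hbN : b < N := hP b (mem_insert_self b Q)
    have hdisj : Disjoint {t ∈ Ico x b | Disjoint (Icc (t - x + 1) t) Q} (Ico (b + x) N) :=
      disjoint_left.2 fun t ht ht' => by
        rw [mem_filter, mem_Ico] at ht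
        rw [mem_Ico] at ht'
        omega
    have hsum : ∑ u ∈ Q, (u - lastBefore (insert b Q) u - x)
        = ∑ u ∈ Q, (u - lastBefore Q u - x) :=
      sum_congr rfl fun u hu => by rw [lastBefore_insert_of_mem hQb hu]
    rw [filter_window_disjoint_insert x N hQb hbN.le, card_union_of_disjoint hdisj,
      ih b hQb, Nat.card_Ico, sum_insert fun hb => lt_irrefl b (hQb b hb),
      lastBefore_insert_self hQb, hsum, sup_insert_of_forall_lt hQb]
    omega

end Windows

section Trace

variable {a : ℕ → ℕ} {n e u : ℕ}

def accessSet (a : ℕ → ℕ) (n e : ℕ) : Finset ℕ := {t ∈ Icc 1 n | a t = e}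

def reuseGap (a : ℕ → ℕ) (u : ℕ) : ℕ := u - (prevSet a u).sup id

theorem accessSet_nonempty (he : e ∈ dataSet a n) : (accessSet a n e).Nonempty := by
  obtain ⟨t, ht, rfl⟩ := mem_image.1 he
  exact ⟨t, mem_filter.2 ⟨ht, rfl⟩⟩

theorem firstAcc_eq_min' (h : (accessSet a n e).Nonempty) :
    firstAcc a n e = (accessSet a n e).min' h := by
  rw [← h.csInf_eq_min', accessSet, coe_filter]
  rfl

theorem lastAcc_eq_max' (h : (accessSet a n e).Nonempty) :
    lastAcc a n e = (accessSet a n e).max' h := by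
  rw [← h.csSup_eq_max', accessSet, coe_filter]
  rfl

theorem filter_lt_accessSet (hu : u ∈ accessSet a n e) :
    {s ∈ accessSet a n e | s < u} = prevSet a u := by
  rw [accessSet, mem_filter, mem_Icc] at hu
  ext s
  simp only [accessSet, prevSet, mem_filter, mem_Icc, mem_Ico, hu.2]
  omega

theorem reuseTime_eq_coe_iff {i : ℕ} :
    reuseTime a u = i ↔ (prevSet a u).Nonempty ∧ reuseGap a u = i := by
  unfold reuseTime reuseGap
  split_ifs with h
  · rw [max'_eq_sup', sup'_eq_sup, Nat.cast_inj]
    exact ⟨fun hi => ⟨h, hi⟩, fun hi => hi.2⟩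
  · simp [h]

theorem reuseGap_mem_Icc (hu : u ∈ Icc 1 n) (h : (prevSet a u).Nonempty) :
    reuseGap a u ∈ Icc 1 (n - 1) := by
  obtain ⟨s, hs, hsup⟩ := exists_mem_eq_sup _ h id
  rw [prevSet, mem_filter, mem_Ico] at hs
  rw [mem_Icc] at hu ⊢
  rw [reuseGap, hsup, id]
  omega

theorem sum_reuseGap_accessSet (x : ℕ) (he : e ∈ dataSet a n) :
    ∑ u ∈ accessSet a n e, (u - lastBefore (accessSet a n e) u - x)
      = (firstAcc a n e - x)
        + ∑ u ∈ accessSet a n e with (prevSet a u).Nonempty, (reuseGap a u - x) := by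
  have hne := accessSet_nonempty he
  set A := accessSet a n e
  have hlast : ∀ u ∈ A, lastBefore A u = (prevSet a u).sup id := fun u hu => by
    rw [lastBefore, filter_lt_accessSet hu]
  have herase : A.erase (A.min' hne) = {u ∈ A | (prevSet a u).Nonempty} := by
    ext u
    simp only [mem_erase, mem_filter]
    refine and_comm.trans (and_congr_right fun hu => ?_)
    rw [← filter_lt_accessSet hu, filter_nonempty_iff]
    constructor
    · intro hmin
      exact ⟨A.min' hne, min'_mem A hne, lt_of_le_of_ne (min'_le A u hu) (Ne.symm hmin)⟩
    · rintro ⟨s, hs, hsu⟩ rfl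
      exact (min'_le A s hs).not_gt hsu
  have hfirst : lastBefore A (A.min' hne) = 0 := by
    rw [lastBefore, filter_eq_empty_iff.2 fun s hs => (min'_le A s hs).not_gt, sup_empty]
    rfl
  rw [← add_sum_erase A _ (min'_mem A hne), herase, hfirst, Nat.sub_zero, firstAcc_eq_min' hne]
  congr 1
  exact sum_congr rfl fun u hu => by rw [hlast u (mem_filter.1 hu).1, reuseGap]

theorem card_filter_not_mem_window (x : ℕ) (he : e ∈ dataSet a n) :
    #{t ∈ Icc x n | e ∉ (Icc (t - x + 1) t).image a}
      = (firstAcc a n e - x) + (n + 1 - lastAcc a n e - x)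
        + ∑ u ∈ accessSet a n e with (prevSet a u).Nonempty, (reuseGap a u - x) := by
  have hwindow : {t ∈ Icc x n | e ∉ (Icc (t - x + 1) t).image a}
      = {t ∈ Ico x (n + 1) | Disjoint (Icc (t - x + 1) t) (accessSet a n e)} := by
    rw [Ico_add_one_right_eq_Icc]
    refine filter_congr fun t ht => ?_
    rw [mem_Icc] at ht
    simp only [mem_image, not_exists, not_and, disjoint_left, accessSet, mem_filter, mem_Icc]
    exact forall_congr' fun s => imp_congr_right fun hs =>
      ⟨fun h _ => h, fun h => h ⟨by omega, by omega⟩⟩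
  have hlt : ∀ p ∈ accessSet a n e, p < n + 1 := fun p hp => by
    rw [accessSet, mem_filter, mem_Icc] at hp
    omega
  have hne := accessSet_nonempty he
  rw [hwindow, card_filter_window_disjoint _ x (n + 1) hlt, sum_reuseGap_accessSet x he,
    lastAcc_eq_max' hne, max'_eq_sup', sup'_eq_sup]
  omega

theorem sum_wss_add_sum_card_not_mem (a : ℕ → ℕ) (n x : ℕ) :
    ∑ t ∈ Icc x n, wss a t x
        + ∑ e ∈ dataSet a n, #{t ∈ Icc x n | e ∉ (Icc (t - x + 1) t).image a}
      = #(dataSet a n) * (n + 1 - x) := by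
  rw [← Nat.card_Icc]
  refine sum_card_add_sum_card_filter_not_mem fun t ht => image_subset_image ?_
  rw [mem_Icc] at ht
  exact Icc_subset_Icc (by omega) ht.2

theorem sum_reuseGap_eq_sum_rtHist (a : ℕ → ℕ) (n x : ℕ) :
    ∑ u ∈ Icc 1 n with (prevSet a u).Nonempty, (reuseGap a u - x)
      = ∑ i ∈ Icc (x + 1) (n - 1), (i - x) * rtHist a n i := by
  set U := {u ∈ Icc 1 n | (prevSet a u).Nonempty}
  have hrt : ∀ i, rtHist a n i = #{u ∈ U | reuseGap a u = i} := fun i => by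
    rw [rtHist, filter_filter]
    exact congrArg card (filter_congr fun u _ => reuseTime_eq_coe_iff)
  have hsmall : ∀ u ∈ U, reuseGap a u - x ≠ 0 → reuseGap a u ∈ Icc (x + 1) (n - 1) := by
    intro u hu hx
    have := mem_Icc.1 (reuseGap_mem_Icc (mem_filter.1 hu).1 (mem_filter.1 hu).2)
    rw [mem_Icc]
    omega
  calc ∑ u ∈ U, (reuseGap a u - x)
      = ∑ u ∈ U with reuseGap a u ∈ Icc (x + 1) (n - 1), (reuseGap a u - x) :=
        (sum_filter_of_ne hsmall).symm
    _ = ∑ i ∈ Icc (x + 1) (n - 1), ∑ u ∈ U with reuseGap a u = i, (reuseGap a u - x) :=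
        (sum_fiberwise_eq_sum_filter _ _ _ _).symm
    _ = ∑ i ∈ Icc (x + 1) (n - 1), (i - x) * rtHist a n i := by
        refine sum_congr rfl fun i _ => ?_
        rw [sum_congr rfl fun u hu => by rw [(mem_filter.1 hu).2], sum_const, smul_eq_mul, hrt,
          mul_comm]

theorem sum_dataSet_sum_accessSet {M : Type*} [AddCommMonoid M] (p : ℕ → Prop) [DecidablePred p]
    (f : ℕ → M) :
    ∑ e ∈ dataSet a n, ∑ u ∈ accessSet a n e with p u, f u
      = ∑ u ∈ Icc 1 n with p u, f u := by
  rw [← sum_fiberwise_of_maps_to fun u hu => mem_image_of_mem a (mem_filter.1 hu).1]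
  exact sum_congr rfl fun e _ => by rw [accessSet, filter_comm]

end Trace

theorem sum_wss_eq (a : ℕ → ℕ) (n x : ℕ) (hxn : x ≤ n) :
    (∑ t ∈ Icc x n, (wss a t x : ℤ))
      = ((n : ℤ) - x + 1) * #(dataSet a n)
        - ∑ i ∈ Icc (x + 1) (n - 1), ((i : ℤ) - x) * rtHist a n i
        - ∑ e ∈ dataSet a n, max ((firstAcc a n e : ℤ) - x) 0
        - ∑ e ∈ dataSet a n, max ((n : ℤ) + 1 - lastAcc a n e - x) 0 := by
  have hcount := sum_wss_add_sum_card_not_mem a n x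
  rw [sum_congr rfl fun e he => card_filter_not_mem_window x he, sum_add_distrib, sum_add_distrib,
    sum_dataSet_sum_accessSet, sum_reuseGap_eq_sum_rtHist] at hcount
  have hrt : ∀ i ∈ Icc (x + 1) (n - 1),
      ((i - x : ℕ) : ℤ) * rtHist a n i = ((i : ℤ) - x) * rtHist a n i :=
    fun i hi => by rw [Nat.cast_sub (by rw [mem_Icc] at hi; omega)]
  have hcast := congrArg (Nat.cast : ℕ → ℤ) hcount
  push_cast [Nat.cast_sub (by omega : x ≤ n + 1), sum_congr rfl hrt] at hcast
  have hfirst : ∀ e ∈ dataSet a n,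
      ((firstAcc a n e - x : ℕ) : ℤ) = max ((firstAcc a n e : ℤ) - x) 0 :=
    fun e _ => by omega
  have hlast : ∀ e ∈ dataSet a n,
      ((n + 1 - lastAcc a n e - x : ℕ) : ℤ) = max ((n : ℤ) + 1 - lastAcc a n e - x) 0 :=
    fun e _ => by omega
  rw [sum_congr rfl hfirst, sum_congr rfl hlast] at hcast
  linarith

theorem xiang_formula_general (n m x : ℕ) (a : ℕ → ℕ) (hm : (dataSet a n).card = m)
    (hxn : x ≤ n) :
    (∑ t ∈ Finset.Icc x n, (wss a t x : ℤ))
      = ((n : ℤ) - (x : ℤ) + 1) * m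
        - ∑ i ∈ Finset.Icc (x + 1) (n - 1), ((i : ℤ) - (x : ℤ)) * (rtHist a n i : ℤ)
        - ∑ e ∈ dataSet a n, max ((firstAcc a n e : ℤ) - (x : ℤ)) 0
        - ∑ e ∈ dataSet a n, max (((n : ℤ) + 1 - (lastAcc a n e : ℤ)) - (x : ℤ)) 0
    ∧ fp a n x
      = (m : ℚ) - (1 / ((n : ℚ) - (x : ℚ) + 1)) *
          ((∑ i ∈ Finset.Icc (x + 1) (n - 1), ((i : ℚ) - (x : ℚ)) * (rtHist a n i : ℚ))
            + (∑ e ∈ dataSet a n, max ((firstAcc a n e : ℚ) - (x : ℚ)) 0)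
            + (∑ e ∈ dataSet a n, max (((n : ℚ) + 1 - (lastAcc a n e : ℚ)) - (x : ℚ)) 0)) := by
  subst hm
  have hW := sum_wss_eq a n x hxn
  refine ⟨hW, ?_⟩
  have hden : (n : ℚ) - x + 1 ≠ 0 := by
    have : (x : ℚ) ≤ n := by exact_mod_cast hxn
    linarith
  have hWℚ := congrArg (Int.cast : ℤ → ℚ) hW
  push_cast at hWℚ
  rw [fp, hWℚ]
  field_simp
  ring

/-- The Xiang formula for the (total) footprint. -/
theorem xiang_formula (n m x : ℕ) (a : ℕ → ℕ) (hm : (dataSet a n).card = m)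
    (hx1 : 1 ≤ x) (hxn : x ≤ n) :
    (∑ t ∈ Finset.Icc x n, (wss a t x : ℤ))
      = ((n : ℤ) - (x : ℤ) + 1) * m
        - ∑ i ∈ Finset.Icc (x + 1) (n - 1), ((i : ℤ) - (x : ℤ)) * (rtHist a n i : ℤ)
        - ∑ e ∈ dataSet a n, max ((firstAcc a n e : ℤ) - (x : ℤ)) 0
        - ∑ e ∈ dataSet a n, max (((n : ℤ) + 1 - (lastAcc a n e : ℤ)) - (x : ℤ)) 0
    ∧ fp a n x
      = (m : ℚ) - (1 / ((n : ℚ) - (x : ℚ) + 1)) *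
          ((∑ i ∈ Finset.Icc (x + 1) (n - 1), ((i : ℚ) - (x : ℚ)) * (rtHist a n i : ℚ))
            + (∑ e ∈ dataSet a n, max ((firstAcc a n e : ℚ) - (x : ℚ)) 0)
            + (∑ e ∈ dataSet a n, max (((n : ℚ) + 1 - (lastAcc a n e : ℚ)) - (x : ℚ)) 0)) :=
  xiang_formula_general n m x a hm hxn
end

section
/- (Incremental footprint formula) For every trace of length n with m distinct data items and every window length w with 1 ≤ w ≤ n, (n−w+1)·fp(w) = (n+1)·m + (n−2m)·w − Σ_{i=1}^{w−1} (w−i)·rt(i) + Σ_{e ∈ M} min(f_e, w) − Σ_{e ∈ M} max(l_e, n−w+1). In particular, fp(w) is determined by m, n, the reuse-time counts rt(i) for i < w only, and the first and last access times. -/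
open Finset

namespace FPAux

/-- most recent previous access, 0 if none -/
def prevT (a : ℕ → ℕ) (s : ℕ) : ℕ := (prevSet a s).sup id

/-- successors of `q` in the trace accessing the same datum -/
def nextSet (a : ℕ → ℕ) (n q : ℕ) : Finset ℕ :=
  (Finset.Icc (q + 1) n).filter (fun t => a t = a q)

/-- the next access to the same datum -/
noncomputable def nxtA (a : ℕ → ℕ) (n q : ℕ) : ℕ :=
  sInf {t | t ∈ Finset.Icc (q + 1) n ∧ a t = a q}

lemma mem_prevSet {a : ℕ → ℕ} {s q : ℕ} :
    q ∈ prevSet a s ↔ (1 ≤ q ∧ q < s) ∧ a q = a s := by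
  simp [prevSet, Finset.mem_filter, Finset.mem_Ico, and_assoc]

lemma prevT_eq_max' {a : ℕ → ℕ} {s : ℕ} (h : (prevSet a s).Nonempty) :
    prevT a s = (prevSet a s).max' h := by
  rw [Finset.max'_eq_sup', Finset.sup'_eq_sup]
  rfl

lemma prevT_mem {a : ℕ → ℕ} {s : ℕ} (h : (prevSet a s).Nonempty) :
    prevT a s ∈ prevSet a s := by
  rw [prevT_eq_max' h]; exact Finset.max'_mem _ h

lemma le_prevT {a : ℕ → ℕ} {s q : ℕ} (h : q ∈ prevSet a s) : q ≤ prevT a s :=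
  Finset.le_sup (f := id) h

lemma prevT_eq_zero {a : ℕ → ℕ} {s : ℕ} (h : ¬ (prevSet a s).Nonempty) :
    prevT a s = 0 := by
  rw [Finset.not_nonempty_iff_eq_empty] at h
  simp [prevT, h]

lemma wss_eq_card {a : ℕ → ℕ} {w t : ℕ} (hw : 1 ≤ w) (ht : w ≤ t) :
    wss a t w = ((Finset.Icc (t - w + 1) t).filter (fun s => prevT a s + w ≤ t)).card := by
  unfold wss
  symm
  apply Finset.card_bij (fun s _ => a s)
  · intro s hs
    exact Finset.mem_image_of_mem a (Finset.mem_filter.mp hs).1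
  · intro s1 h1 s2 h2 heq
    obtain ⟨hm1, hp1⟩ := Finset.mem_filter.mp h1
    obtain ⟨hm2, hp2⟩ := Finset.mem_filter.mp h2
    rw [Finset.mem_Icc] at hm1 hm2
    by_contra hne
    rcases Nat.lt_or_ge s1 s2 with hlt | hge
    · have hmem : s1 ∈ prevSet a s2 := mem_prevSet.mpr ⟨⟨by omega, hlt⟩, heq⟩
      have := le_prevT hmem
      omega
    · have hlt : s2 < s1 := by omega
      have hmem : s2 ∈ prevSet a s1 := mem_prevSet.mpr ⟨⟨by omega, hlt⟩, heq.symm⟩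
      have := le_prevT hmem
      omega
  · intro e he
    obtain ⟨s0, hs0, he0⟩ := Finset.mem_image.mp he
    have hPne : ((Finset.Icc (t - w + 1) t).filter (fun q => a q = e)).Nonempty :=
      ⟨s0, Finset.mem_filter.mpr ⟨hs0, he0⟩⟩
    set c := ((Finset.Icc (t - w + 1) t).filter (fun q => a q = e)).min' hPne with hc
    have hcP : c ∈ (Finset.Icc (t - w + 1) t).filter (fun q => a q = e) :=
      Finset.min'_mem _ _
    obtain ⟨hcw, hce⟩ := Finset.mem_filter.mp hcP
    have hcw' := Finset.mem_Icc.mp hcw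
    refine ⟨c, ?_, hce⟩
    refine Finset.mem_filter.mpr ⟨hcw, ?_⟩
    by_cases hne : (prevSet a c).Nonempty
    · have hpm := prevT_mem hne
      rw [mem_prevSet] at hpm
      by_contra hcon
      have hin : prevT a c ∈ (Finset.Icc (t - w + 1) t).filter (fun q => a q = e) :=
        Finset.mem_filter.mpr
          ⟨Finset.mem_Icc.mpr ⟨by omega, by omega⟩, by rw [hpm.2, hce]⟩
      have := Finset.min'_le _ _ hin
      omega
    · have h0 := prevT_eq_zero hne
      omega

lemma firstAcc_eq {a : ℕ → ℕ} {n s : ℕ} (hs : s ∈ Finset.Icc 1 n)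
    (hemp : ¬ (prevSet a s).Nonempty) : firstAcc a n (a s) = s := by
  rw [Finset.not_nonempty_iff_eq_empty] at hemp
  have hmem : s ∈ {t | t ∈ Finset.Icc 1 n ∧ a t = a s} := ⟨hs, rfl⟩
  have hle : firstAcc a n (a s) ≤ s := Nat.sInf_le hmem
  have hin : firstAcc a n (a s) ∈ {t | t ∈ Finset.Icc 1 n ∧ a t = a s} :=
    Nat.sInf_mem ⟨s, hmem⟩
  obtain ⟨hin1, hin2⟩ := hin
  have hb1 := Finset.mem_Icc.mp hin1
  have hb2 := Finset.mem_Icc.mp hs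
  by_contra hne
  have : firstAcc a n (a s) ∈ prevSet a s :=
    mem_prevSet.mpr ⟨⟨hb1.1, by omega⟩, hin2⟩
  rw [hemp] at this
  exact absurd this (Finset.notMem_empty _)

lemma firstAcc_mem {a : ℕ → ℕ} {n e : ℕ} (he : e ∈ dataSet a n) :
    firstAcc a n e ∈ Finset.Icc 1 n ∧ a (firstAcc a n e) = e
      ∧ ¬ (prevSet a (firstAcc a n e)).Nonempty := by
  obtain ⟨t0, ht0, he0⟩ := Finset.mem_image.mp he
  have hin : firstAcc a n e ∈ {t | t ∈ Finset.Icc 1 n ∧ a t = e} :=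
    Nat.sInf_mem ⟨t0, ht0, he0⟩
  refine ⟨hin.1, hin.2, ?_⟩
  rintro ⟨q, hq⟩
  rw [mem_prevSet] at hq
  have hb1 := Finset.mem_Icc.mp hin.1
  have hqm : q ∈ {t | t ∈ Finset.Icc 1 n ∧ a t = e} :=
    ⟨Finset.mem_Icc.mpr ⟨hq.1.1, by omega⟩, by rw [hq.2, hin.2]⟩
  have hx : firstAcc a n e ≤ q := Nat.sInf_le hqm
  omega

lemma sum_first {a : ℕ → ℕ} {n : ℕ} {β : Type*} [AddCommMonoid β] (g : ℕ → β) :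
    ∑ s ∈ (Finset.Icc 1 n).filter (fun s => ¬ (prevSet a s).Nonempty), g s
      = ∑ e ∈ dataSet a n, g (firstAcc a n e) := by
  apply Finset.sum_nbij' (i := fun s => a s) (j := fun e => firstAcc a n e)
  · intro s hs
    exact Finset.mem_image_of_mem a (Finset.mem_filter.mp hs).1
  · intro e he
    obtain ⟨h1, _, h3⟩ := firstAcc_mem he
    exact Finset.mem_filter.mpr ⟨h1, h3⟩
  · intro s hs
    obtain ⟨h1, h2⟩ := Finset.mem_filter.mp hs
    exact firstAcc_eq h1 h2
  · intro e he
    exact (firstAcc_mem he).2.1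
  · intro s hs
    obtain ⟨h1, h2⟩ := Finset.mem_filter.mp hs
    rw [firstAcc_eq h1 h2]

lemma lastAcc_bdd {a : ℕ → ℕ} {n e : ℕ} :
    BddAbove {t | t ∈ Finset.Icc 1 n ∧ a t = e} :=
  ⟨n, fun x hx => (Finset.mem_Icc.mp hx.1).2⟩

lemma lastAcc_eq {a : ℕ → ℕ} {n s : ℕ} (hs : s ∈ Finset.Icc 1 n)
    (hemp : ¬ (nextSet a n s).Nonempty) : lastAcc a n (a s) = s := by
  have hmem : s ∈ {t | t ∈ Finset.Icc 1 n ∧ a t = a s} := ⟨hs, rfl⟩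
  have hle : s ≤ lastAcc a n (a s) := le_csSup lastAcc_bdd hmem
  have hin : lastAcc a n (a s) ∈ {t | t ∈ Finset.Icc 1 n ∧ a t = a s} :=
    Nat.sSup_mem ⟨s, hmem⟩ lastAcc_bdd
  obtain ⟨hin1, hin2⟩ := hin
  have hb1 := Finset.mem_Icc.mp hin1
  by_contra hne
  exact hemp ⟨lastAcc a n (a s),
    Finset.mem_filter.mpr ⟨Finset.mem_Icc.mpr ⟨by omega, hb1.2⟩, hin2⟩⟩

lemma lastAcc_mem {a : ℕ → ℕ} {n e : ℕ} (he : e ∈ dataSet a n) :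
    lastAcc a n e ∈ Finset.Icc 1 n ∧ a (lastAcc a n e) = e
      ∧ ¬ (nextSet a n (lastAcc a n e)).Nonempty := by
  obtain ⟨t0, ht0, he0⟩ := Finset.mem_image.mp he
  have hin : lastAcc a n e ∈ {t | t ∈ Finset.Icc 1 n ∧ a t = e} :=
    Nat.sSup_mem ⟨t0, ht0, he0⟩ lastAcc_bdd
  refine ⟨hin.1, hin.2, ?_⟩
  rintro ⟨q, hq⟩
  obtain ⟨hq1, hq2⟩ := Finset.mem_filter.mp hq
  have hb := Finset.mem_Icc.mp hq1
  have hqm : q ∈ {t | t ∈ Finset.Icc 1 n ∧ a t = e} :=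
    ⟨Finset.mem_Icc.mpr ⟨by omega, hb.2⟩, by rw [hq2, hin.2]⟩
  have hx : q ≤ lastAcc a n e := le_csSup (lastAcc_bdd (a := a) (n := n) (e := e)) hqm
  omega

lemma sum_last {a : ℕ → ℕ} {n : ℕ} {β : Type*} [AddCommMonoid β] (g : ℕ → β) :
    ∑ s ∈ (Finset.Icc 1 n).filter (fun s => ¬ (nextSet a n s).Nonempty), g s
      = ∑ e ∈ dataSet a n, g (lastAcc a n e) := by
  apply Finset.sum_nbij' (i := fun s => a s) (j := fun e => lastAcc a n e)
  · intro s hs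
    exact Finset.mem_image_of_mem a (Finset.mem_filter.mp hs).1
  · intro e he
    obtain ⟨h1, _, h3⟩ := lastAcc_mem he
    exact Finset.mem_filter.mpr ⟨h1, h3⟩
  · intro s hs
    obtain ⟨h1, h2⟩ := Finset.mem_filter.mp hs
    exact lastAcc_eq h1 h2
  · intro e he
    exact (lastAcc_mem he).2.1
  · intro s hs
    obtain ⟨h1, h2⟩ := Finset.mem_filter.mp hs
    rw [lastAcc_eq h1 h2]

lemma sum_prev {a : ℕ → ℕ} {n : ℕ} {β : Type*} [AddCommMonoid β] (g : ℕ → β) :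
    ∑ s ∈ (Finset.Icc 1 n).filter (fun s => (prevSet a s).Nonempty), g (prevT a s)
      = ∑ q ∈ (Finset.Icc 1 n).filter (fun q => (nextSet a n q).Nonempty), g q := by
  apply Finset.sum_nbij' (i := fun s => prevT a s) (j := fun q => nxtA a n q)
  · intro s hs
    obtain ⟨h1, h2⟩ := Finset.mem_filter.mp hs
    have hb := Finset.mem_Icc.mp h1
    have hp := prevT_mem h2
    rw [mem_prevSet] at hp
    refine Finset.mem_filter.mpr ⟨Finset.mem_Icc.mpr ⟨hp.1.1, by omega⟩, ?_⟩
    exact ⟨s, Finset.mem_filter.mpr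
      ⟨Finset.mem_Icc.mpr ⟨by omega, hb.2⟩, hp.2.symm⟩⟩
  · intro q hq
    obtain ⟨h1, h2⟩ := Finset.mem_filter.mp hq
    have hb := Finset.mem_Icc.mp h1
    obtain ⟨t1, ht1⟩ := h2
    obtain ⟨ht1a, ht1b⟩ := Finset.mem_filter.mp ht1
    have hset : nxtA a n q ∈ {t | t ∈ Finset.Icc (q + 1) n ∧ a t = a q} :=
      Nat.sInf_mem ⟨t1, ht1a, ht1b⟩
    have hc := Finset.mem_Icc.mp hset.1
    refine Finset.mem_filter.mpr ⟨Finset.mem_Icc.mpr ⟨by omega, hc.2⟩, ?_⟩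
    exact ⟨q, mem_prevSet.mpr ⟨⟨hb.1, by omega⟩, hset.2.symm⟩⟩
  · intro s hs
    obtain ⟨h1, h2⟩ := Finset.mem_filter.mp hs
    have hb := Finset.mem_Icc.mp h1
    have hp := prevT_mem h2
    rw [mem_prevSet] at hp
    have hmem : s ∈ {t | t ∈ Finset.Icc (prevT a s + 1) n ∧ a t = a (prevT a s)} :=
      ⟨Finset.mem_Icc.mpr ⟨by omega, hb.2⟩, hp.2.symm⟩
    have hle : nxtA a n (prevT a s) ≤ s := Nat.sInf_le hmem
    have hin : nxtA a n (prevT a s) ∈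
        {t | t ∈ Finset.Icc (prevT a s + 1) n ∧ a t = a (prevT a s)} :=
      Nat.sInf_mem ⟨s, hmem⟩
    have hc := Finset.mem_Icc.mp hin.1
    by_contra hne
    have hcp : nxtA a n (prevT a s) ∈ prevSet a s :=
      mem_prevSet.mpr ⟨⟨by omega, by omega⟩, by rw [hin.2, hp.2]⟩
    have := le_prevT hcp
    omega
  · intro q hq
    obtain ⟨h1, h2⟩ := Finset.mem_filter.mp hq
    have hb := Finset.mem_Icc.mp h1
    obtain ⟨t1, ht1⟩ := h2
    obtain ⟨ht1a, ht1b⟩ := Finset.mem_filter.mp ht1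
    have hin : nxtA a n q ∈ {t | t ∈ Finset.Icc (q + 1) n ∧ a t = a q} :=
      Nat.sInf_mem ⟨t1, ht1a, ht1b⟩
    have hc := Finset.mem_Icc.mp hin.1
    have hqmem : q ∈ prevSet a (nxtA a n q) :=
      mem_prevSet.mpr ⟨⟨hb.1, by omega⟩, hin.2.symm⟩
    have hle : q ≤ prevT a (nxtA a n q) := le_prevT hqmem
    have hpm := prevT_mem ⟨q, hqmem⟩
    rw [mem_prevSet] at hpm
    by_contra hne
    have hpq : prevT a (nxtA a n q) ∈ {t | t ∈ Finset.Icc (q + 1) n ∧ a t = a q} :=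
      ⟨Finset.mem_Icc.mpr ⟨by omega, by omega⟩, by rw [hpm.2, hin.2]⟩
    have hx : nxtA a n q ≤ prevT a (nxtA a n q) := Nat.sInf_le hpq
    omega
  · intro s hs
    rfl

end FPAux

namespace FPAux

lemma rt_fiber {a : ℕ → ℕ} {n i : ℕ} :
    ((Finset.Icc 1 n).filter (fun s => (prevSet a s).Nonempty)).filter
        (fun s => s - prevT a s = i)
      = (Finset.Icc 1 n).filter (fun t => reuseTime a t = (i : ℕ∞)) := by
  ext t
  simp only [Finset.mem_filter, and_assoc]
  constructor
  · rintro ⟨h1, h2, h3⟩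
    refine ⟨h1, ?_⟩
    rw [reuseTime, dif_pos h2, ← prevT_eq_max' h2, h3]
  · rintro ⟨h1, h2⟩
    by_cases hne : (prevSet a t).Nonempty
    · refine ⟨h1, hne, ?_⟩
      rw [reuseTime, dif_pos hne, ← prevT_eq_max' hne] at h2
      exact_mod_cast h2
    · rw [reuseTime, dif_neg hne] at h2
      simp at h2

lemma sum_rt {a : ℕ → ℕ} {n w : ℕ} (hw1 : 1 ≤ w) (hwn : w ≤ n) :
    ∑ s ∈ (Finset.Icc 1 n).filter (fun s => (prevSet a s).Nonempty),
        max ((w : ℤ) - ((s : ℤ) - (prevT a s : ℤ))) 0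
      = ∑ i ∈ Finset.Icc 1 (w - 1), ((w : ℤ) - (i : ℤ)) * (rtHist a n i : ℤ) := by
  have hmap : ∀ s ∈ (Finset.Icc 1 n).filter (fun s => (prevSet a s).Nonempty),
      s - prevT a s ∈ Finset.Icc 1 n := by
    intro s hs
    obtain ⟨h1, h2⟩ := Finset.mem_filter.mp hs
    have hb := Finset.mem_Icc.mp h1
    have hp := prevT_mem h2
    rw [mem_prevSet] at hp
    exact Finset.mem_Icc.mpr ⟨by omega, by omega⟩
  rw [← Finset.sum_fiberwise_of_maps_to hmap
    (fun s => max ((w : ℤ) - ((s : ℤ) - (prevT a s : ℤ))) 0)]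
  have hstep : ∀ i ∈ Finset.Icc 1 n,
      (∑ s ∈ ((Finset.Icc 1 n).filter (fun s => (prevSet a s).Nonempty)).filter
          (fun s => s - prevT a s = i),
        max ((w : ℤ) - ((s : ℤ) - (prevT a s : ℤ))) 0)
      = (rtHist a n i : ℤ) * max ((w : ℤ) - (i : ℤ)) 0 := by
    intro i hi
    have hcongr : ∀ s ∈ ((Finset.Icc 1 n).filter (fun s => (prevSet a s).Nonempty)).filter
          (fun s => s - prevT a s = i),
        max ((w : ℤ) - ((s : ℤ) - (prevT a s : ℤ))) 0 = max ((w : ℤ) - (i : ℤ)) 0 := by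
      intro s hs
      obtain ⟨hs1, hs2⟩ := Finset.mem_filter.mp hs
      obtain ⟨h1, h2⟩ := Finset.mem_filter.mp hs1
      have hp := prevT_mem h2
      rw [mem_prevSet] at hp
      have : ((s : ℤ) - (prevT a s : ℤ)) = (i : ℤ) := by omega
      rw [this]
    rw [Finset.sum_congr rfl hcongr, Finset.sum_const, rt_fiber, nsmul_eq_mul]
    rfl
  rw [Finset.sum_congr rfl hstep]
  rw [← Finset.sum_subset (Finset.Icc_subset_Icc_right (by omega : w - 1 ≤ n))]
  · apply Finset.sum_congr rfl
    intro i hi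
    have hb := Finset.mem_Icc.mp hi
    have hmax : max ((w : ℤ) - (i : ℤ)) 0 = (w : ℤ) - (i : ℤ) := by omega
    rw [hmax, mul_comm]
  · intro i hi hni
    have hb := Finset.mem_Icc.mp hi
    have hiw : w ≤ i := by
      rw [Finset.mem_Icc] at hni; omega
    have hmax : max ((w : ℤ) - (i : ℤ)) 0 = 0 := by omega
    rw [hmax, mul_zero]

/-- reusable per-access correction term -/
def dF (a : ℕ → ℕ) (n w s : ℕ) : ℤ :=
  if (prevSet a s).Nonempty then
    max ((prevT a s : ℤ) - ((n : ℤ) + 1 - w)) 0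
      - max ((w : ℤ) - ((s : ℤ) - (prevT a s : ℤ))) 0
  else ((min s w : ℕ) : ℤ) - w

lemma inner_filter_eq {a : ℕ → ℕ} {n w s : ℕ} (hw1 : 1 ≤ w) (hs : s ∈ Finset.Icc 1 n) :
    (Finset.Icc w n).filter (fun t => s ∈ Finset.Icc (t - w + 1) t ∧ prevT a s + w ≤ t)
      = Finset.Icc (max (max w s) (prevT a s + w)) (min n (s + w - 1)) := by
  ext t
  simp only [Finset.mem_filter, Finset.mem_Icc]
  omega

lemma inner_val {a : ℕ → ℕ} {n w : ℕ} (hw1 : 1 ≤ w) (hwn : w ≤ n) :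
    ∀ s ∈ Finset.Icc 1 n,
      ((Finset.Icc (max (max w s) (prevT a s + w)) (min n (s + w - 1))).card : ℤ)
        = (w : ℤ) - max ((s : ℤ) - ((n : ℤ) + 1 - (w : ℤ))) 0 + dF a n w s := by
  intro s hs
  have hb := Finset.mem_Icc.mp hs
  by_cases h : (prevSet a s).Nonempty
  · have hp := prevT_mem h
    rw [mem_prevSet] at hp
    rw [dF, if_pos h, Nat.card_Icc]
    omega
  · have h0 := prevT_eq_zero h
    rw [dF, if_neg h, Nat.card_Icc, h0]
    omega

lemma main_int {a : ℕ → ℕ} {n w : ℕ} (hw1 : 1 ≤ w) (hwn : w ≤ n) :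
    ∑ t ∈ Finset.Icc w n, (wss a t w : ℤ)
      = ((n : ℤ) + 1) * ((dataSet a n).card : ℤ)
          + ((n : ℤ) - 2 * ((dataSet a n).card : ℤ)) * w
        - ∑ i ∈ Finset.Icc 1 (w - 1), ((w : ℤ) - (i : ℤ)) * (rtHist a n i : ℤ)
        + ∑ e ∈ dataSet a n, ((min (firstAcc a n e) w : ℕ) : ℤ)
        - ∑ e ∈ dataSet a n, ((max (lastAcc a n e) (n - w + 1) : ℕ) : ℤ) := by
  -- Step 1: rewrite each wss as a sum of indicators over s ∈ Icc 1 n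
  have step1 : ∀ t ∈ Finset.Icc w n,
      (wss a t w : ℤ) = ∑ s ∈ Finset.Icc 1 n,
        (if s ∈ Finset.Icc (t - w + 1) t ∧ prevT a s + w ≤ t then (1 : ℤ) else 0) := by
    intro t ht
    have htb := Finset.mem_Icc.mp ht
    rw [wss_eq_card hw1 htb.1]
    rw [Finset.sum_boole]
    congr 1
    congr 1
    ext s
    simp only [Finset.mem_filter, Finset.mem_Icc]
    omega
  rw [Finset.sum_congr rfl step1, Finset.sum_comm]
  -- Step 2: evaluate the inner sum for each s
  have step2 : ∀ s ∈ Finset.Icc 1 n,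
      (∑ t ∈ Finset.Icc w n,
        (if s ∈ Finset.Icc (t - w + 1) t ∧ prevT a s + w ≤ t then (1 : ℤ) else 0))
      = (w : ℤ) - max ((s : ℤ) - ((n : ℤ) + 1 - (w : ℤ))) 0 + dF a n w s := by
    intro s hs
    rw [Finset.sum_boole, inner_filter_eq hw1 hs, inner_val hw1 hwn s hs]
  rw [Finset.sum_congr rfl step2]
  rw [Finset.sum_add_distrib, Finset.sum_sub_distrib]
  -- Split the dF sum over reuse/first accesses
  rw [← Finset.sum_filter_add_sum_filter_not (Finset.Icc 1 n)
    (fun s => (prevSet a s).Nonempty) (dF a n w)]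
  -- first-access part
  have hF : ∑ s ∈ (Finset.Icc 1 n).filter (fun s => ¬ (prevSet a s).Nonempty), dF a n w s
      = ∑ e ∈ dataSet a n, (((min (firstAcc a n e) w : ℕ) : ℤ) - (w : ℤ)) := by
    rw [← sum_first (fun s => ((min s w : ℕ) : ℤ) - (w : ℤ))]
    apply Finset.sum_congr rfl
    intro s hs
    rw [dF, if_neg (Finset.mem_filter.mp hs).2]
  -- reuse part
  have hR : ∑ s ∈ (Finset.Icc 1 n).filter (fun s => (prevSet a s).Nonempty), dF a n w s
      = (∑ q ∈ (Finset.Icc 1 n).filter (fun q => (nextSet a n q).Nonempty),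
          max ((q : ℤ) - ((n : ℤ) + 1 - w)) 0)
        - ∑ i ∈ Finset.Icc 1 (w - 1), ((w : ℤ) - (i : ℤ)) * (rtHist a n i : ℤ) := by
    have : ∀ s ∈ (Finset.Icc 1 n).filter (fun s => (prevSet a s).Nonempty),
        dF a n w s = max ((prevT a s : ℤ) - ((n : ℤ) + 1 - w)) 0
          - max ((w : ℤ) - ((s : ℤ) - (prevT a s : ℤ))) 0 := by
      intro s hs
      rw [dF, if_pos (Finset.mem_filter.mp hs).2]
    rw [Finset.sum_congr rfl this, Finset.sum_sub_distrib,
      sum_prev (fun q => max ((q : ℤ) - ((n : ℤ) + 1 - w)) 0), sum_rt hw1 hwn]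
  rw [hF, hR]
  -- last-access part: Σ_{q ∈ NL} max = Σ_{q ∈ S} max − Σ_{q ∈ L} max
  have hNL : ∑ q ∈ (Finset.Icc 1 n).filter (fun q => (nextSet a n q).Nonempty),
        max ((q : ℤ) - ((n : ℤ) + 1 - w)) 0
      = (∑ q ∈ Finset.Icc 1 n, max ((q : ℤ) - ((n : ℤ) + 1 - w)) 0)
        - ∑ e ∈ dataSet a n,
            (((max (lastAcc a n e) (n - w + 1) : ℕ) : ℤ) - ((n - w + 1 : ℕ) : ℤ)) := by
    rw [← sum_last (fun q => ((max q (n - w + 1) : ℕ) : ℤ) - ((n - w + 1 : ℕ) : ℤ))]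
    rw [← Finset.sum_filter_add_sum_filter_not (Finset.Icc 1 n)
      (fun q => (nextSet a n q).Nonempty) (fun q => max ((q : ℤ) - ((n : ℤ) + 1 - w)) 0)]
    have : ∀ q ∈ (Finset.Icc 1 n).filter (fun q => ¬ (nextSet a n q).Nonempty),
        max ((q : ℤ) - ((n : ℤ) + 1 - w)) 0
          = ((max q (n - w + 1) : ℕ) : ℤ) - ((n - w + 1 : ℕ) : ℤ) := by
      intro q hq
      omega
    rw [Finset.sum_congr rfl this]
    ring
  rw [hNL]
  -- combine Σ_S (w − max) + Σ_S max = n*w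
  have hW : (∑ _s ∈ Finset.Icc 1 n, (w : ℤ))
        - (∑ s ∈ Finset.Icc 1 n, max ((s : ℤ) - ((n : ℤ) + 1 - (w : ℤ))) 0)
        + (∑ q ∈ Finset.Icc 1 n, max ((q : ℤ) - ((n : ℤ) + 1 - w)) 0)
      = (n : ℤ) * w := by
    rw [Finset.sum_const, Nat.card_Icc]
    simp
  -- counting: |dataSet| sums of constants
  have hcF : ∑ e ∈ dataSet a n, (w : ℤ) = ((dataSet a n).card : ℤ) * w := by
    rw [Finset.sum_const, nsmul_eq_mul]
  have hcL : ∑ e ∈ dataSet a n, ((n - w + 1 : ℕ) : ℤ)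
      = ((dataSet a n).card : ℤ) * ((n - w + 1 : ℕ) : ℤ) := by
    rw [Finset.sum_const, nsmul_eq_mul]
  rw [Finset.sum_sub_distrib, Finset.sum_sub_distrib, hcF, hcL]
  have hcast : ((n - w + 1 : ℕ) : ℤ) = (n : ℤ) - (w : ℤ) + 1 := by omega
  rw [hcast]
  have hconst : (∑ _s ∈ Finset.Icc 1 n, (w : ℤ)) = (n : ℤ) * w := by
    rw [Finset.sum_const, Nat.card_Icc, nsmul_eq_mul]
    simp
  rw [hconst] at hW
  linarith [hW]

end FPAux

/-- The incremental footprint formula: fp(w) is determined by m, n, rt(i) for i < w,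
and the first and last access times. -/
theorem incremental_footprint_formula (n m w : ℕ) (a : ℕ → ℕ)
    (hm : (dataSet a n).card = m) (hw1 : 1 ≤ w) (hwn : w ≤ n) :
    ((n : ℚ) - (w : ℚ) + 1) * fp a n w
      = ((n : ℚ) + 1) * m + ((n : ℚ) - 2 * m) * w
        - ∑ i ∈ Finset.Icc 1 (w - 1), ((w : ℚ) - (i : ℚ)) * (rtHist a n i : ℚ)
        + ∑ e ∈ dataSet a n, ((min (firstAcc a n e) w : ℕ) : ℚ)
        - ∑ e ∈ dataSet a n, ((max (lastAcc a n e) (n - w + 1) : ℕ) : ℚ) := by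
  have hInt := FPAux.main_int (a := a) hw1 hwn
  rw [hm] at hInt
  have hwq : (w : ℚ) ≤ (n : ℚ) := by exact_mod_cast hwn
  have hd : ((n : ℚ) - (w : ℚ) + 1) ≠ 0 := by
    have : (0 : ℚ) < (n : ℚ) - (w : ℚ) + 1 := by linarith
    exact ne_of_gt this
  rw [fp, mul_comm, div_mul_cancel₀ _ hd]
  exact_mod_cast hInt
end

section
/- (WS–FP equivalence: the Denning–Schwartz recursion computes the steady-state footprint) For every trace of length n with m distinct data items and every integer x with 0 ≤ x ≤ n−1, ss-fp(x+1) − ss-fp(x) = (1/n)·Σ_{i=x+1}^{n−1} rt(i), i.e. the increment of the steady-state footprint at window length x equals the fraction of accesses whose (finite) reuse time exceeds x. Consequently, for every x ≥ 0, ss-fp(x) = ss-fp(0) + Σ_{i=0}^{x−1} P(rt > i), where P(rt > i) = (1/n)·Σ_{j=i+1}^{n−1} rt(j). -/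
open Finset

lemma ssfp_step (a : ℕ → ℕ) (n x : ℕ) :
    ssfp a n (x + 1) - ssfp a n x
      = (1 / (n : ℚ)) * ∑ i ∈ Finset.Icc (x + 1) (n - 1), (rtHist a n i : ℚ) := by
  have hext : ∑ i ∈ Finset.Icc (x + 2) (n - 1), ((i : ℚ) - ((x+1 : ℕ) : ℚ)) * (rtHist a n i : ℚ)
      = ∑ i ∈ Finset.Icc (x + 1) (n - 1), ((i : ℚ) - ((x+1 : ℕ) : ℚ)) * (rtHist a n i : ℚ) := by
    apply Finset.sum_subset (Finset.Icc_subset_Icc_left (by omega))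
    intro i hi hni
    have h1 := Finset.mem_Icc.mp hi
    have : i = x + 1 := by
      by_contra h
      exact hni (Finset.mem_Icc.mpr ⟨by omega, h1.2⟩)
    subst this
    push_cast
    ring
  unfold ssfp
  rw [show x + 1 + 1 = x + 2 from rfl, hext]
  rw [Finset.mul_sum, Finset.mul_sum, Finset.mul_sum]
  rw [show ∀ A B : ℚ, (((dataSet a n).card : ℚ) - A) - (((dataSet a n).card : ℚ) - B) = B - A
    from fun A B => by ring]
  rw [← Finset.sum_sub_distrib]
  apply Finset.sum_congr rfl
  intro i _
  push_cast
  ring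

/-- WS–FP equivalence: the Denning–Schwartz recursion computes the steady-state
footprint. -/
theorem ws_fp_equivalence (n m : ℕ) (a : ℕ → ℕ) (hm : (dataSet a n).card = m) :
    (∀ x : ℕ, x ≤ n - 1 →
      ssfp a n (x + 1) - ssfp a n x
        = (1 / (n : ℚ)) * ∑ i ∈ Finset.Icc (x + 1) (n - 1), (rtHist a n i : ℚ))
    ∧ (∀ x : ℕ,
      ssfp a n x
        = ssfp a n 0
          + ∑ i ∈ Finset.range x,
              (1 / (n : ℚ)) * ∑ j ∈ Finset.Icc (i + 1) (n - 1), (rtHist a n j : ℚ)) := by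
  constructor
  · intro x _
    exact ssfp_step a n x
  · intro x
    induction x with
    | zero => simp
    | succ k ih =>
      rw [Finset.sum_range_succ, ← add_assoc, ← ih, ← ssfp_step a n k]
      ring
end
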